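/- The singular locus of C_{8,2}, i.e. the set of points [x:y:z] ∈ ℙ²(ℂ) at which all three partial derivatives ∂F/∂x, ∂F/∂y, ∂F/∂z vanish, consists of exactly 6 points. It contains the two points [1:0:0] and [0:1:0], which lie on the line z = 0; it is invariant under the involution σ: [x:y:z] ↦ [x:y:−z], and σ fixes exactly the two points [1:0:0] and [0:1:0] among them, the remaining four singular points forming two orbits of size 2 under σ. -/

import Mathlib

open MvPolynomial

/-- The degree-8 polynomial defining the curve `C_{8,2}`. -/
noncomputable def Foct : MvPolynomial (Fin 3) ℂ :=
  C (-(11/3) : ℂ) * X 0 ^ 5 * X 1 ^ 3 + C (-(407/16) : ℂ) * X 0 ^ 4 * X 1 ^ 4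
  + C (-44 : ℂ) * X 0 ^ 3 * X 1 ^ 5
  + C (-(11/8) : ℂ) * X 0 ^ 4 * X 1 ^ 2 * X 2 ^ 2 + C ((33/2) : ℂ) * X 0 ^ 2 * X 1 ^ 4 * X 2 ^ 2
  + C ((27/176) : ℂ) * X 0 ^ 4 * X 2 ^ 4 + C (-(4/11) : ℂ) * X 0 ^ 3 * X 1 * X 2 ^ 4
  + C (-(49/11) : ℂ) * X 0 ^ 2 * X 1 ^ 2 * X 2 ^ 4 + C (-(48/11) : ℂ) * X 0 * X 1 ^ 3 * X 2 ^ 4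
  + C ((243/11) : ℂ) * X 1 ^ 4 * X 2 ^ 4 + C (-(5/6) : ℂ) * X 0 ^ 2 * X 2 ^ 6
  + C (10 : ℂ) * X 1 ^ 2 * X 2 ^ 6 + X 2 ^ 8

/-- The complex projective plane with its quotient topology. -/
abbrev P2 := Quotient (projectivizationSetoid ℂ (Fin 3 → ℂ))

/-- The point of `P2` with homogeneous coordinates `v`. -/
noncomputable def ptP2 (v : Fin 3 → ℂ) (h : v ≠ 0) : P2 := ⟦⟨v, h⟩⟧

/-- The singular locus of `C_{8,2}`: the points where all three partial
derivatives of `Foct` vanish. -/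
def SingC82 : Set P2 :=
  { p | ∀ v : { w : Fin 3 → ℂ // w ≠ 0 }, ⟦v⟧ = p →
      ∀ i : Fin 3, eval v.val (pderiv i Foct) = 0 }

/-- The line `z = 0` in `P2`. -/
def Lz : Set P2 := { p | ∀ v : { w : Fin 3 → ℂ // w ≠ 0 }, ⟦v⟧ = p → v.val 2 = 0 }

/-- The linear involution `(x, y, z) ↦ (x, y, -z)` of `ℂ³`. -/
def sigmaFun (v : Fin 3 → ℂ) : Fin 3 → ℂ := ![v 0, v 1, -v 2]

lemma sigmaFun_ne_zero {v : Fin 3 → ℂ} (hv : v ≠ 0) : sigmaFun v ≠ 0 := by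
  intro h
  apply hv
  funext i
  fin_cases i
  · simpa [sigmaFun] using congrFun h 0
  · simpa [sigmaFun] using congrFun h 1
  · simpa [sigmaFun, neg_eq_zero] using congrFun h 2

/-- The projective involution `[x:y:z] ↦ [x:y:-z]` of `P2`. -/
noncomputable def sigmaP2 : P2 → P2 :=
  Quotient.map (fun v => ⟨sigmaFun v.val, sigmaFun_ne_zero v.property⟩)
    (by
      rintro ⟨v, hv⟩ ⟨w, hw⟩ ⟨c, hc⟩
      refine ⟨c, ?_⟩
      simp only at hc
      funext i
      fin_cases i <;>
        simp [sigmaFun, ← hc, Pi.smul_apply, smul_eq_mul, mul_neg])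

theorem Pt1_ne : (![1, 0, 0] : Fin 3 → ℂ) ≠ 0 := fun h => by simpa using congrFun h 0

theorem Pt2_ne : (![0, 1, 0] : Fin 3 → ℂ) ≠ 0 := fun h => by simpa using congrFun h 1


lemma eval_pd0 (v : Fin 3 → ℂ) : eval v (pderiv 0 Foct) =
    ((-48:ℂ)/11) * v 1^3 * v 2^4 + ((-5:ℂ)/3) * v 0 * v 2^6 + ((-98:ℂ)/11) * v 0 * v 1^2 * v 2^4
    + (33:ℂ) * v 0 * v 1^4 * v 2^2 + ((-12:ℂ)/11) * v 0^2 * v 1 * v 2^4 + (-132:ℂ) * v 0^2 * v 1^5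
    + ((27:ℂ)/44) * v 0^3 * v 2^4 + ((-11:ℂ)/2) * v 0^3 * v 1^2 * v 2^2
    + ((-407:ℂ)/4) * v 0^3 * v 1^4 + ((-55:ℂ)/3) * v 0^4 * v 1^3 := by
  simp [Foct, pderiv_mul, pderiv_pow, pderiv_X]; ring

lemma eval_pd1 (v : Fin 3 → ℂ) : eval v (pderiv 1 Foct) =
    (20:ℂ) * v 1 * v 2^6 + ((972:ℂ)/11) * v 1^3 * v 2^4 + ((-144:ℂ)/11) * v 0 * v 1^2 * v 2^4
    + ((-98:ℂ)/11) * v 0^2 * v 1 * v 2^4 + (66:ℂ) * v 0^2 * v 1^3 * v 2^2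
    + ((-4:ℂ)/11) * v 0^3 * v 2^4 + (-220:ℂ) * v 0^3 * v 1^4 + ((-11:ℂ)/4) * v 0^4 * v 1 * v 2^2
    + ((-407:ℂ)/4) * v 0^4 * v 1^3 + (-11:ℂ) * v 0^5 * v 1^2 := by
  simp [Foct, pderiv_mul, pderiv_pow, pderiv_X]; ring

lemma eval_pd2 (v : Fin 3 → ℂ) : eval v (pderiv 2 Foct) =
    (8:ℂ) * v 2^7 + (60:ℂ) * v 1^2 * v 2^5 + ((972:ℂ)/11) * v 1^4 * v 2^3
    + ((-192:ℂ)/11) * v 0 * v 1^3 * v 2^3 + (-5:ℂ) * v 0^2 * v 2^5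
    + ((-196:ℂ)/11) * v 0^2 * v 1^2 * v 2^3 + (33:ℂ) * v 0^2 * v 1^4 * v 2
    + ((-16:ℂ)/11) * v 0^3 * v 1 * v 2^3 + ((27:ℂ)/44) * v 0^4 * v 2^3
    + ((-11:ℂ)/4) * v 0^4 * v 1^2 * v 2 := by
  simp [Foct, pderiv_mul, pderiv_pow, pderiv_X]; ring

lemma mk_eq_iff {v w : Fin 3 → ℂ} (hv : v ≠ 0) (hw : w ≠ 0) :
    ptP2 v hv = ptP2 w hw ↔ ∃ c : ℂˣ, c • w = v := by
  rw [ptP2, ptP2, Quotient.eq]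
  exact MulAction.orbitRel_apply.trans MulAction.mem_orbit_iff

lemma eval_pd_smul (t : ℂ) (v : Fin 3 → ℂ) (i : Fin 3) :
    eval (t • v) (pderiv i Foct) = t^7 * eval v (pderiv i Foct) := by
  fin_cases i
  · show eval (t • v) (pderiv (0:Fin 3) Foct) = t^7 * eval v (pderiv (0:Fin 3) Foct)
    simp only [eval_pd0, Pi.smul_apply, smul_eq_mul]; ring
  · show eval (t • v) (pderiv (1:Fin 3) Foct) = t^7 * eval v (pderiv (1:Fin 3) Foct)
    simp only [eval_pd1, Pi.smul_apply, smul_eq_mul]; ring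
  · show eval (t • v) (pderiv (2:Fin 3) Foct) = t^7 * eval v (pderiv (2:Fin 3) Foct)
    simp only [eval_pd2, Pi.smul_apply, smul_eq_mul]; ring

lemma mem_sing_iff {v : Fin 3 → ℂ} (hv : v ≠ 0) :
    ptP2 v hv ∈ SingC82 ↔ ∀ i, eval v (pderiv i Foct) = 0 := by
  constructor
  · intro h i; exact h ⟨v, hv⟩ rfl i
  · intro h v' hv' i
    have hv'' : ⟦v'⟧ = (⟦⟨v, hv⟩⟧ : P2) := hv'
    rw [Quotient.eq] at hv''
    obtain ⟨c, hc⟩ := MulAction.mem_orbit_iff.mp (MulAction.orbitRel_apply.mp hv'')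
    have : v'.val = (c : ℂ) • v := by rw [← hc, Units.smul_def]
    rw [this, eval_pd_smul, h i, mul_zero]

lemma classify0 (x y : ℂ)
    (hx : ((-48:ℂ)/11) * y^3 * 0^4 + ((-5:ℂ)/3) * x * 0^6 + ((-98:ℂ)/11) * x * y^2 * 0^4
    + (33:ℂ) * x * y^4 * 0^2 + ((-12:ℂ)/11) * x^2 * y * 0^4 + (-132:ℂ) * x^2 * y^5
    + ((27:ℂ)/44) * x^3 * 0^4 + ((-11:ℂ)/2) * x^3 * y^2 * 0^2
    + ((-407:ℂ)/4) * x^3 * y^4 + ((-55:ℂ)/3) * x^4 * y^3 = 0)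
    (hy : (20:ℂ) * y * 0^6 + ((972:ℂ)/11) * y^3 * 0^4 + ((-144:ℂ)/11) * x * y^2 * 0^4
    + ((-98:ℂ)/11) * x^2 * y * 0^4 + (66:ℂ) * x^2 * y^3 * 0^2
    + ((-4:ℂ)/11) * x^3 * 0^4 + (-220:ℂ) * x^3 * y^4 + ((-11:ℂ)/4) * x^4 * y * 0^2
    + ((-407:ℂ)/4) * x^4 * y^3 + (-11:ℂ) * x^5 * y^2 = 0) :
    x = 0 ∨ y = 0 := by
  by_contra h
  push_neg at h
  obtain ⟨hx0, hy0⟩ := h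
  have hQ1 : (55:ℂ)/3*x^2 + 407/4*x*y + 132*y^2 = 0 := by
    have h' : x^2*y^3*((55:ℂ)/3*x^2 + 407/4*x*y + 132*y^2) = 0 := by linear_combination -hx
    rcases mul_eq_zero.mp h' with h'' | h''
    · rcases mul_eq_zero.mp h'' with h3 | h3
      · exact absurd (pow_eq_zero_iff (by norm_num) |>.mp h3) hx0
      · exact absurd (pow_eq_zero_iff (by norm_num) |>.mp h3) hy0
    · exact h''
  have hQ2 : (11:ℂ)*x^2 + 407/4*x*y + 220*y^2 = 0 := by
    have h' : x^3*y^2*((11:ℂ)*x^2 + 407/4*x*y + 220*y^2) = 0 := by linear_combination -hy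
    rcases mul_eq_zero.mp h' with h'' | h''
    · rcases mul_eq_zero.mp h'' with h3 | h3
      · exact absurd (pow_eq_zero_iff (by norm_num) |>.mp h3) hx0
      · exact absurd (pow_eq_zero_iff (by norm_num) |>.mp h3) hy0
    · exact h''
  have e1 : x^2 = 12*y^2 := by linear_combination (3/22 : ℂ) * hQ1 - (3/22 : ℂ) * hQ2
  have e2 : (407:ℂ)/4*x*y = -352*y^2 := by linear_combination hQ2 - 11*e1
  have e3 : (407:ℂ)/4*x = -352*y := mul_right_cancel₀ hy0 (by linear_combination e2)
  have e4 : x = -(1408:ℂ)/407*y := by linear_combination (4/407 : ℂ) * e3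
  have e5 : ((12:ℂ) - 1982464/165649)*y^2 = 0 := by
    linear_combination (x - 1408/407*y) * e4 - e1
  have : y^2 = 0 := by
    rcases mul_eq_zero.mp e5 with h | h
    · norm_num at h
    · exact h
  exact hy0 (pow_eq_zero_iff (by norm_num) |>.mp this)

lemma affine_classify (x y : ℂ)
    (hx : ((-48:ℂ)/11) * y^3 * 1^4 + ((-5:ℂ)/3) * x * 1^6 + ((-98:ℂ)/11) * x * y^2 * 1^4
    + (33:ℂ) * x * y^4 * 1^2 + ((-12:ℂ)/11) * x^2 * y * 1^4 + (-132:ℂ) * x^2 * y^5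
    + ((27:ℂ)/44) * x^3 * 1^4 + ((-11:ℂ)/2) * x^3 * y^2 * 1^2
    + ((-407:ℂ)/4) * x^3 * y^4 + ((-55:ℂ)/3) * x^4 * y^3 = 0)
    (hy : (20:ℂ) * y * 1^6 + ((972:ℂ)/11) * y^3 * 1^4 + ((-144:ℂ)/11) * x * y^2 * 1^4
    + ((-98:ℂ)/11) * x^2 * y * 1^4 + (66:ℂ) * x^2 * y^3 * 1^2
    + ((-4:ℂ)/11) * x^3 * 1^4 + (-220:ℂ) * x^3 * y^4 + ((-11:ℂ)/4) * x^4 * y * 1^2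
    + ((-407:ℂ)/4) * x^4 * y^3 + (-11:ℂ) * x^5 * y^2 = 0)
    (hz : (8:ℂ) * 1^7 + (60:ℂ) * y^2 * 1^5 + ((972:ℂ)/11) * y^4 * 1^3
    + ((-192:ℂ)/11) * x * y^3 * 1^3 + (-5:ℂ) * x^2 * 1^5
    + ((-196:ℂ)/11) * x^2 * y^2 * 1^3 + (33:ℂ) * x^2 * y^4 * 1
    + ((-16:ℂ)/11) * x^3 * y * 1^3 + ((27:ℂ)/44) * x^4 * 1^3
    + ((-11:ℂ)/4) * x^4 * y^2 * 1 = 0) :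
    x^4 - 8/3*x^2 + 48/11 = 0 ∧ 8*x*y + 3*x^2 - 4 = 0 := by
  constructor
  · have h : (x^4 - 8/3*x^2 + 48/11)^4 = 0 := by
      linear_combination (((-26873856:ℂ)/14641)*y^1 + ((-248610816:ℂ)/14641)*x^1 + ((-507147264:ℂ)/14641)*x^2*y^1 + ((200068096:ℂ)/14641)*x^3 + ((75249920:ℂ)/1331)*x^4*y^1 + ((64139776:ℂ)/11979)*x^5 + ((-2924480:ℂ)/99)*x^6*y^1 + ((-18923264:ℂ)/3267)*x^7 + ((15302600:ℂ)/3267)*x^8*y^1 + ((2697296:ℂ)/3267)*x^9 + ((110:ℂ)/9)*x^10*y^1 + ((44:ℂ)/9)*x^11) * hx + (((-1990656:ℂ)/14641)*y^1 + ((113052672:ℂ)/14641)*x^1 + ((298266624:ℂ)/14641)*x^1*y^2 + ((12413952:ℂ)/1331)*x^2*y^1 + ((-138962688:ℂ)/14641)*x^3 + ((-45149952:ℂ)/1331)*x^3*y^2 + ((-19494400:ℂ)/1331)*x^4*y^1 + ((10497280:ℂ)/3993)*x^5 + ((584896:ℂ)/33)*x^5*y^2 + ((8676992:ℂ)/1089)*x^6*y^1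 + ((19152:ℂ)/121)*x^7 + ((-3060520:ℂ)/1089)*x^7*y^2 + ((-4460528:ℂ)/3267)*x^8*y^1 + ((-1624:ℂ)/891)*x^9 + ((-22:ℂ)/3)*x^9*y^2 + ((-44:ℂ)/9)*x^10*y^1 + ((-11:ℂ)/27)*x^11) * hy + (((663552:ℂ)/14641) + ((-288230400:ℂ)/14641)*x^1*y^1 + ((-53001216:ℂ)/14641)*x^2 + ((-331776:ℂ)/121)*x^2*y^2 + ((14154240:ℂ)/1331)*x^3*y^1 + ((9492992:ℂ)/3993)*x^4 + ((3533120:ℂ)/363)*x^5*y^1 + ((4188032:ℂ)/3267)*x^6 + ((-17829160:ℂ)/3267)*x^7*y^1 + ((-2652592:ℂ)/3267)*x^8 + ((-2090:ℂ)/81)*x^9*y^1 + ((-748:ℂ)/81)*x^10 + ((55:ℂ)/27)*x^11*y^1 + ((44:ℂ)/27)*x^12) * hz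
    exact pow_eq_zero_iff (by norm_num : (4:ℕ) ≠ 0) |>.mp h
  · have h : (8*x*y + 3*x^2 - 4)^4 = 0 := by
      linear_combination (((-1296:ℂ))*y^1 + ((2688:ℂ))*x^1 + ((1716:ℂ))*x^2*y^1 + ((-132:ℂ))*x^3) * hx + (((-96:ℂ))*y^1 + ((-932:ℂ))*x^1 + ((-1320:ℂ))*x^1*y^2 + ((132:ℂ))*x^2*y^1 + ((-33:ℂ))*x^3) * hy + (((32:ℂ)) + ((1804:ℂ))*x^1*y^1 + ((484:ℂ))*x^2 + ((-1936:ℂ))*x^2*y^2 + ((1573:ℂ))*x^3*y^1 + ((132:ℂ))*x^4) * hz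
    exact pow_eq_zero_iff (by norm_num : (4:ℕ) ≠ 0) |>.mp h

lemma affine_backward (x y : ℂ) (h4 : x^4 - 8/3*x^2 + 48/11 = 0)
    (hu : 8*x*y + 3*x^2 - 4 = 0) :
    (((-48:ℂ)/11) * y^3 * 1^4 + ((-5:ℂ)/3) * x * 1^6 + ((-98:ℂ)/11) * x * y^2 * 1^4
    + (33:ℂ) * x * y^4 * 1^2 + ((-12:ℂ)/11) * x^2 * y * 1^4 + (-132:ℂ) * x^2 * y^5
    + ((27:ℂ)/44) * x^3 * 1^4 + ((-11:ℂ)/2) * x^3 * y^2 * 1^2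
    + ((-407:ℂ)/4) * x^3 * y^4 + ((-55:ℂ)/3) * x^4 * y^3 = 0) ∧
    ((20:ℂ) * y * 1^6 + ((972:ℂ)/11) * y^3 * 1^4 + ((-144:ℂ)/11) * x * y^2 * 1^4
    + ((-98:ℂ)/11) * x^2 * y * 1^4 + (66:ℂ) * x^2 * y^3 * 1^2
    + ((-4:ℂ)/11) * x^3 * 1^4 + (-220:ℂ) * x^3 * y^4 + ((-11:ℂ)/4) * x^4 * y * 1^2
    + ((-407:ℂ)/4) * x^4 * y^3 + (-11:ℂ) * x^5 * y^2 = 0) ∧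
    ((8:ℂ) * 1^7 + (60:ℂ) * y^2 * 1^5 + ((972:ℂ)/11) * y^4 * 1^3
    + ((-192:ℂ)/11) * x * y^3 * 1^3 + (-5:ℂ) * x^2 * 1^5
    + ((-196:ℂ)/11) * x^2 * y^2 * 1^3 + (33:ℂ) * x^2 * y^4 * 1
    + ((-16:ℂ)/11) * x^3 * y * 1^3 + ((27:ℂ)/44) * x^4 * 1^3
    + ((-11:ℂ)/4) * x^4 * y^2 * 1 = 0) := by
  refine ⟨?_, ?_, ?_⟩
  · linear_combination (((-45:ℂ)/32)*y^1 + ((-153:ℂ)/32)*y^3 + ((-21:ℂ)/64)*x^1 + ((-145:ℂ)/64)*x^1*y^2) * h4 + (((-135:ℂ)/88)*y^1 + ((-33:ℂ)/8)*y^3 + ((31:ℂ)/528)*x^1 + ((-53:ℂ)/16)*x^1*y^2 + ((-33:ℂ)/2)*x^1*y^4 + ((17:ℂ)/96)*x^2*y^1 + ((-209:ℂ)/32)*x^2*y^3 + ((7:ℂ)/64)*x^3 + ((145:ℂ)/192)*x^3*y^2) * hu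
  · linear_combination (((7:ℂ)/4)*y^1 + ((81:ℂ)/4)*y^3 + ((-3:ℂ)/16)*x^1 + ((61:ℂ)/16)*x^1*y^2) * h4 + (((-34:ℂ)/11)*y^1 + ((-9:ℂ)/44)*x^1 + ((5:ℂ)/4)*x^1*y^2 + ((-5:ℂ)/3)*x^2*y^1 + ((-55:ℂ)/2)*x^2*y^3 + ((1:ℂ)/16)*x^3 + ((-79:ℂ)/16)*x^3*y^2) * hu
  · linear_combination (((15:ℂ)/16) + ((207:ℂ)/16)*y^2 + ((81:ℂ)/4)*y^4 + ((87:ℂ)/32)*x^1*y^1 + ((243:ℂ)/32)*x^1*y^3) * h4 + (((-43:ℂ)/44) + ((-39:ℂ)/44)*y^2 + ((89:ℂ)/88)*x^1*y^1 + ((87:ℂ)/8)*x^1*y^3 + ((-19:ℂ)/176)*x^2 + ((-45:ℂ)/16)*x^2*y^2 + ((-29:ℂ)/32)*x^3*y^1 + ((-81:ℂ)/32)*x^3*y^3) * hu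

lemma vne (A B : ℂ) : (![A, B, 1] : Fin 3 → ℂ) ≠ 0 := fun h => by simpa using congrFun h 2

lemma sing_of_affine (A B : ℂ) (h4 : A^4 - 8/3*A^2 + 48/11 = 0)
    (hu : 8*A*B + 3*A^2 - 4 = 0) : ptP2 ![A, B, 1] (vne A B) ∈ SingC82 := by
  rw [mem_sing_iff]
  obtain ⟨e0, e1, e2⟩ := affine_backward A B h4 hu
  intro i
  have c0 : (![A, B, 1] : Fin 3 → ℂ) 0 = A := rfl
  have c1 : (![A, B, 1] : Fin 3 → ℂ) 1 = B := rfl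
  have c2 : (![A, B, 1] : Fin 3 → ℂ) 2 = 1 := rfl
  fin_cases i
  · show eval _ (pderiv (0:Fin 3) Foct) = 0
    rw [eval_pd0, c0, c1, c2]; linear_combination e0
  · show eval _ (pderiv (1:Fin 3) Foct) = 0
    rw [eval_pd1, c0, c1, c2]; linear_combination e1
  · show eval _ (pderiv (2:Fin 3) Foct) = 0
    rw [eval_pd2, c0, c1, c2]; linear_combination e2

lemma point_eq {v : Fin 3 → ℂ} (hv : v ≠ 0) (hz2 : v 2 ≠ 0) (A B : ℂ)
    (hA : (v 2)⁻¹ * v 0 = A) (hB : (v 2)⁻¹ * v 1 = B) :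
    ptP2 v hv = ptP2 ![A, B, 1] (vne A B) := by
  refine (mk_eq_iff hv (vne A B)).mpr ⟨Units.mk0 (v 2) hz2, ?_⟩
  funext i
  fin_cases i
  · show v 2 * A = v 0
    rw [← hA]; field_simp
  · show v 2 * B = v 1
    rw [← hB]; field_simp
  · show v 2 * 1 = v 2
    rw [mul_one]

lemma pt_ne_aux (A B x y : ℂ) (h : (![A,B,0] : Fin 3 → ℂ) ≠ 0) :
    ptP2 ![A,B,0] h ≠ ptP2 ![x,y,1] (vne x y) := by
  intro he
  obtain ⟨c, hc⟩ := (mk_eq_iff h (vne x y)).mp he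
  have h2 : (c:ℂ) * 1 = 0 := congrFun hc 2
  rw [mul_one] at h2
  exact c.ne_zero h2

lemma q_ne_q (x y x' y' : ℂ) (hxx : x ≠ x') :
    ptP2 ![x,y,1] (vne x y) ≠ ptP2 ![x',y',1] (vne x' y') := by
  intro he
  obtain ⟨c, hc⟩ := (mk_eq_iff (vne x y) (vne x' y')).mp he
  have h2 : (c:ℂ) * 1 = 1 := congrFun hc 2
  rw [mul_one] at h2
  have h0 : (c:ℂ) * x' = x := congrFun hc 0
  rw [h2, one_mul] at h0
  exact hxx h0.symm

lemma ptP2_congr {v w : Fin 3 → ℂ} (h : v = w) (hv : v ≠ 0) (hw : w ≠ 0) :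
    ptP2 v hv = ptP2 w hw := by subst h; rfl

lemma sigma_pt (v : Fin 3 → ℂ) (h : v ≠ 0) :
    sigmaP2 (ptP2 v h) = ptP2 (sigmaFun v) (sigmaFun_ne_zero h) := rfl

lemma sigma_q (A B : ℂ) :
    sigmaP2 (ptP2 ![A,B,1] (vne A B)) = ptP2 ![-A,-B,1] (vne (-A) (-B)) := by
  rw [sigma_pt]
  have h1 : sigmaFun ![A,B,1] = ![A,B,-1] := by
    funext i; fin_cases i <;> rfl
  rw [show ptP2 (sigmaFun ![A,B,1]) (sigmaFun_ne_zero (vne A B))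
      = ptP2 ![A,B,-1] (h1 ▸ sigmaFun_ne_zero (vne A B)) from by simp only [h1]]
  refine (mk_eq_iff _ _).mpr ⟨Units.mk0 (-1) (by norm_num), ?_⟩
  funext i
  fin_cases i
  · show (-1 : ℂ) * (-A) = A; ring
  · show (-1 : ℂ) * (-B) = B; ring
  · show (-1 : ℂ) * 1 = -1; ring

/-- The singular locus of `C_{8,2}` consists of exactly `6` points; it contains
`[1:0:0]` and `[0:1:0]`, which lie on the line `z = 0`; it is invariant under the
involution `σ : [x:y:z] ↦ [x:y:-z]`, whose fixed points in it are exactly `[1:0:0]`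
and `[0:1:0]`, the remaining four points forming two orbits of size `2` under `σ`. -/
theorem singular_locus_of_C82 :
    SingC82.ncard = 6 ∧
    ptP2 ![1, 0, 0] Pt1_ne ∈ SingC82 ∧ ptP2 ![0, 1, 0] Pt2_ne ∈ SingC82 ∧
    ptP2 ![1, 0, 0] Pt1_ne ∈ Lz ∧ ptP2 ![0, 1, 0] Pt2_ne ∈ Lz ∧
    sigmaP2 '' SingC82 = SingC82 ∧
    { p ∈ SingC82 | sigmaP2 p = p } = {ptP2 ![1, 0, 0] Pt1_ne, ptP2 ![0, 1, 0] Pt2_ne} ∧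
    ∃ q₁ q₂ q₃ q₄ : P2,
      [ptP2 ![1, 0, 0] Pt1_ne, ptP2 ![0, 1, 0] Pt2_ne, q₁, q₂, q₃, q₄].Pairwise (· ≠ ·) ∧
      SingC82 = {ptP2 ![1, 0, 0] Pt1_ne, ptP2 ![0, 1, 0] Pt2_ne, q₁, q₂, q₃, q₄} ∧
      sigmaP2 q₁ = q₂ ∧ sigmaP2 q₃ = q₄ := by
  -- setup
  obtain ⟨s, hs⟩ := IsAlgClosed.exists_pow_nat_eq (-256/99 : ℂ) (n := 2) (by norm_num)
  have hsne : s ≠ 0 := by intro h; rw [h] at hs; norm_num at hs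
  have h43 : (4:ℂ)/3 + s ≠ 0 := by
    intro h
    have hs' : s = -(4/3) := by linear_combination h
    rw [hs'] at hs; norm_num at hs
  have h43' : (4:ℂ)/3 - s ≠ 0 := by
    intro h
    have hs' : s = 4/3 := by linear_combination -h
    rw [hs'] at hs; norm_num at hs
  obtain ⟨x0, hx0⟩ := IsAlgClosed.exists_pow_nat_eq ((4:ℂ)/3 + s) (n := 2) (by norm_num)
  obtain ⟨x1, hx1⟩ := IsAlgClosed.exists_pow_nat_eq ((4:ℂ)/3 - s) (n := 2) (by norm_num)
  have hx0ne : x0 ≠ 0 := by intro h; rw [h] at hx0; exact h43 (by linear_combination -hx0)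
  have hx1ne : x1 ≠ 0 := by intro h; rw [h] at hx1; exact h43' (by linear_combination -hx1)
  set y0 : ℂ := (4 - 3*x0^2)/(8*x0) with hy0def
  set y1 : ℂ := (4 - 3*x1^2)/(8*x1) with hy1def
  have hu0 : 8*x0*y0 + 3*x0^2 - 4 = 0 := by rw [hy0def]; field_simp; ring
  have hu1 : 8*x1*y1 + 3*x1^2 - 4 = 0 := by rw [hy1def]; field_simp; ring
  have h40 : x0^4 - 8/3*x0^2 + 48/11 = 0 := by
    linear_combination (x0^2 + s - 4/3) * hx0 + hs
  have h41 : x1^4 - 8/3*x1^2 + 48/11 = 0 := by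
    linear_combination (x1^2 - s - 4/3) * hx1 + hs
  have h40' : (-x0)^4 - 8/3*(-x0)^2 + 48/11 = 0 := by linear_combination h40
  have h41' : (-x1)^4 - 8/3*(-x1)^2 + 48/11 = 0 := by linear_combination h41
  have hu0' : 8*(-x0)*(-y0) + 3*(-x0)^2 - 4 = 0 := by linear_combination hu0
  have hu1' : 8*(-x1)*(-y1) + 3*(-x1)^2 - 4 = 0 := by linear_combination hu1
  set P1 := ptP2 ![1, 0, 0] Pt1_ne with hP1
  set P2pt := ptP2 ![0, 1, 0] Pt2_ne with hP2
  set q1 := ptP2 ![x0, y0, 1] (vne x0 y0) with hq1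
  set q2 := ptP2 ![-x0, -y0, 1] (vne (-x0) (-y0)) with hq2
  set q3 := ptP2 ![x1, y1, 1] (vne x1 y1) with hq3
  set q4 := ptP2 ![-x1, -y1, 1] (vne (-x1) (-y1)) with hq4
  -- memberships
  have hmem1 : P1 ∈ SingC82 := by
    rw [hP1, mem_sing_iff]
    intro i
    have c0 : (![1, 0, 0] : Fin 3 → ℂ) 0 = 1 := rfl
    have c1 : (![1, 0, 0] : Fin 3 → ℂ) 1 = 0 := rfl
    have c2 : (![1, 0, 0] : Fin 3 → ℂ) 2 = 0 := rfl
    fin_cases i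
    · show eval _ (pderiv (0:Fin 3) Foct) = 0
      rw [eval_pd0, c0, c1, c2]; ring
    · show eval _ (pderiv (1:Fin 3) Foct) = 0
      rw [eval_pd1, c0, c1, c2]; ring
    · show eval _ (pderiv (2:Fin 3) Foct) = 0
      rw [eval_pd2, c0, c1, c2]; ring
  have hmem2 : P2pt ∈ SingC82 := by
    rw [hP2, mem_sing_iff]
    intro i
    have c0 : (![0, 1, 0] : Fin 3 → ℂ) 0 = 0 := rfl
    have c1 : (![0, 1, 0] : Fin 3 → ℂ) 1 = 1 := rfl
    have c2 : (![0, 1, 0] : Fin 3 → ℂ) 2 = 0 := rfl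
    fin_cases i
    · show eval _ (pderiv (0:Fin 3) Foct) = 0
      rw [eval_pd0, c0, c1, c2]; ring
    · show eval _ (pderiv (1:Fin 3) Foct) = 0
      rw [eval_pd1, c0, c1, c2]; ring
    · show eval _ (pderiv (2:Fin 3) Foct) = 0
      rw [eval_pd2, c0, c1, c2]; ring
  have hmq1 : q1 ∈ SingC82 := sing_of_affine x0 y0 h40 hu0
  have hmq2 : q2 ∈ SingC82 := sing_of_affine (-x0) (-y0) h40' hu0'
  have hmq3 : q3 ∈ SingC82 := sing_of_affine x1 y1 h41 hu1
  have hmq4 : q4 ∈ SingC82 := sing_of_affine (-x1) (-y1) h41' hu1'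
  -- distinctness
  have hsq : ∀ u w : ℂ, u^2 = 4/3 + s → w^2 = 4/3 - s → u ≠ w := by
    intro u w hu hw h
    rw [h] at hu
    rw [hu] at hw
    exact hsne (by linear_combination (1/2 : ℂ) * hw)
  have hxm0 : (-x0)^2 = 4/3 + s := by linear_combination hx0
  have hxm1 : (-x1)^2 = 4/3 - s := by linear_combination hx1
  have ne00 : x0 ≠ -x0 := fun h => hx0ne (by linear_combination (1/2 : ℂ) * h)
  have ne11 : x1 ≠ -x1 := fun h => hx1ne (by linear_combination (1/2 : ℂ) * h)
  have nP12 : P1 ≠ P2pt := by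
    rw [hP1, hP2]
    intro he
    obtain ⟨c, hc⟩ := (mk_eq_iff _ _).mp he
    have h0 : (c:ℂ) * 0 = 1 := congrFun hc 0
    rw [mul_zero] at h0
    exact zero_ne_one h0
  have n1q1 : P1 ≠ q1 := pt_ne_aux 1 0 x0 y0 Pt1_ne
  have n1q2 : P1 ≠ q2 := pt_ne_aux 1 0 (-x0) (-y0) Pt1_ne
  have n1q3 : P1 ≠ q3 := pt_ne_aux 1 0 x1 y1 Pt1_ne
  have n1q4 : P1 ≠ q4 := pt_ne_aux 1 0 (-x1) (-y1) Pt1_ne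
  have n2q1 : P2pt ≠ q1 := pt_ne_aux 0 1 x0 y0 Pt2_ne
  have n2q2 : P2pt ≠ q2 := pt_ne_aux 0 1 (-x0) (-y0) Pt2_ne
  have n2q3 : P2pt ≠ q3 := pt_ne_aux 0 1 x1 y1 Pt2_ne
  have n2q4 : P2pt ≠ q4 := pt_ne_aux 0 1 (-x1) (-y1) Pt2_ne
  have nq12 : q1 ≠ q2 := q_ne_q x0 y0 (-x0) (-y0) ne00
  have nq13 : q1 ≠ q3 := q_ne_q x0 y0 x1 y1 (hsq x0 x1 hx0 hx1)
  have nq14 : q1 ≠ q4 := q_ne_q x0 y0 (-x1) (-y1) (hsq x0 (-x1) hx0 hxm1)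
  have nq23 : q2 ≠ q3 := q_ne_q (-x0) (-y0) x1 y1 (hsq (-x0) x1 hxm0 hx1)
  have nq24 : q2 ≠ q4 := q_ne_q (-x0) (-y0) (-x1) (-y1) (hsq (-x0) (-x1) hxm0 hxm1)
  have nq34 : q3 ≠ q4 := q_ne_q x1 y1 (-x1) (-y1) ne11
  -- classification
  have hclass : ∀ p ∈ SingC82, p = P1 ∨ p = P2pt ∨ p = q1 ∨ p = q2 ∨ p = q3 ∨ p = q4 := by
    intro p hp
    obtain ⟨u, rfl⟩ := Quotient.exists_rep p
    have hp' : ∀ i, eval u.val (pderiv i Foct) = 0 :=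
      (mem_sing_iff u.prop).mp hp
    have H0 := hp' 0
    have H1 := hp' 1
    have H2 := hp' 2
    rw [eval_pd0] at H0
    rw [eval_pd1] at H1
    rw [eval_pd2] at H2
    by_cases hz2 : u.val 2 = 0
    · rw [hz2] at H0 H1
      rcases classify0 _ _ H0 H1 with h | h
      · -- x = 0 : point [0:1:0]
        right; left
        have hv1 : u.val 1 ≠ 0 := by
          intro h1
          apply u.prop
          funext i
          fin_cases i
          · show u.val 0 = 0; exact h
          · show u.val 1 = 0; exact h1
          · show u.val 2 = 0; exact hz2
        rw [hP2]
        refine (mk_eq_iff u.prop Pt2_ne).mpr ⟨Units.mk0 (u.val 1) hv1, ?_⟩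
        funext i
        fin_cases i
        · show u.val 1 * 0 = u.val 0; rw [mul_zero, h]
        · show u.val 1 * 1 = u.val 1; rw [mul_one]
        · show u.val 1 * 0 = u.val 2; rw [mul_zero, hz2]
      · -- y = 0 : point [1:0:0]
        left
        have hv0 : u.val 0 ≠ 0 := by
          intro h0
          apply u.prop
          funext i
          fin_cases i
          · show u.val 0 = 0; exact h0
          · show u.val 1 = 0; exact h
          · show u.val 2 = 0; exact hz2
        rw [hP1]
        refine (mk_eq_iff u.prop Pt1_ne).mpr ⟨Units.mk0 (u.val 0) hv0, ?_⟩
        funext i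
        fin_cases i
        · show u.val 0 * 1 = u.val 0; rw [mul_one]
        · show u.val 0 * 0 = u.val 1; rw [mul_zero, h]
        · show u.val 0 * 0 = u.val 2; rw [mul_zero, hz2]
    · -- z ≠ 0
      have E : ∀ i, eval ((u.val 2)⁻¹ • u.val) (pderiv i Foct) = 0 := by
        intro i; rw [eval_pd_smul, hp' i, mul_zero]
      have E0 := E 0
      have E1 := E 1
      have E2 := E 2
      rw [eval_pd0] at E0
      rw [eval_pd1] at E1
      rw [eval_pd2] at E2
      simp only [Pi.smul_apply, smul_eq_mul] at E0 E1 E2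
      have hc1 : (u.val 2)⁻¹ * u.val 2 = 1 := inv_mul_cancel₀ hz2
      rw [hc1] at E0 E1 E2
      set a : ℂ := (u.val 2)⁻¹ * u.val 0 with hadef
      set b : ℂ := (u.val 2)⁻¹ * u.val 1 with hbdef
      obtain ⟨h4, hu⟩ := affine_classify a b (by linear_combination E0)
        (by linear_combination E1) (by linear_combination E2)
      have ha0 : a ≠ 0 := by
        intro h
        rw [h] at h4
        norm_num at h4
      have hfac : (a^2 - (4/3 + s)) * (a^2 - (4/3 - s)) = 0 := by
        linear_combination h4 - hs
      have hbval : ∀ A B : ℂ, a = A → 8*A*B + 3*A^2 - 4 = 0 → A ≠ 0 → b = B := by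
        intro A B hA huAB hAne
        have h8 : (8:ℂ)*A ≠ 0 := mul_ne_zero (by norm_num) hAne
        apply mul_left_cancel₀ h8
        rw [hA] at hu
        linear_combination hu - huAB
      rcases mul_eq_zero.mp hfac with hcase | hcase
      · have hfa : (a - x0) * (a + x0) = 0 := by linear_combination hcase - hx0
        rcases mul_eq_zero.mp hfa with h | h
        · have hA : a = x0 := by linear_combination h
          have hB : b = y0 := hbval x0 y0 hA hu0 hx0ne
          right; right; left
          rw [hq1]
          exact point_eq u.prop hz2 x0 y0 (hadef ▸ hA) (hbdef ▸ hB)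
        · have hA : a = -x0 := by linear_combination h
          have hB : b = -y0 := hbval (-x0) (-y0) hA hu0' (neg_ne_zero.mpr hx0ne)
          right; right; right; left
          rw [hq2]
          exact point_eq u.prop hz2 (-x0) (-y0) (hadef ▸ hA) (hbdef ▸ hB)
      · have hfa : (a - x1) * (a + x1) = 0 := by linear_combination hcase - hx1
        rcases mul_eq_zero.mp hfa with h | h
        · have hA : a = x1 := by linear_combination h
          have hB : b = y1 := hbval x1 y1 hA hu1 hx1ne
          right; right; right; right; left
          rw [hq3]
          exact point_eq u.prop hz2 x1 y1 (hadef ▸ hA) (hbdef ▸ hB)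
        · have hA : a = -x1 := by linear_combination h
          have hB : b = -y1 := hbval (-x1) (-y1) hA hu1' (neg_ne_zero.mpr hx1ne)
          right; right; right; right; right
          rw [hq4]
          exact point_eq u.prop hz2 (-x1) (-y1) (hadef ▸ hA) (hbdef ▸ hB)
  have hSing : SingC82 = {P1, P2pt, q1, q2, q3, q4} := by
    apply Set.Subset.antisymm
    · intro p hp
      rcases hclass p hp with h | h | h | h | h | h <;>
        simp [h]
    · intro p hp
      simp only [Set.mem_insert_iff, Set.mem_singleton_iff] at hp
      rcases hp with rfl | rfl | rfl | rfl | rfl | rfl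
      · exact hmem1
      · exact hmem2
      · exact hmq1
      · exact hmq2
      · exact hmq3
      · exact hmq4
  -- sigma values
  have hs1 : sigmaP2 P1 = P1 := by
    rw [hP1, sigma_pt]
    refine (mk_eq_iff _ Pt1_ne).mpr ⟨1, ?_⟩
    funext i
    fin_cases i
    · show (1:ℂ) * 1 = 1; ring
    · show (1:ℂ) * 0 = 0; ring
    · show (1:ℂ) * 0 = -0; ring
  have hs2' : sigmaP2 P2pt = P2pt := by
    rw [hP2, sigma_pt]
    refine (mk_eq_iff _ Pt2_ne).mpr ⟨1, ?_⟩
    funext i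
    fin_cases i
    · show (1:ℂ) * 0 = 0; ring
    · show (1:ℂ) * 1 = 1; ring
    · show (1:ℂ) * 0 = -0; ring
  have hsq1 : sigmaP2 q1 = q2 := by
    rw [hq1, hq2]; exact sigma_q x0 y0
  have hsq3 : sigmaP2 q3 = q4 := by
    rw [hq3, hq4]; exact sigma_q x1 y1
  have hsq2 : sigmaP2 q2 = q1 := by
    rw [hq2, hq1, sigma_q]
    exact ptP2_congr (by funext i; fin_cases i <;> simp) _ _
  have hsq4 : sigmaP2 q4 = q3 := by
    rw [hq4, hq3, sigma_q]
    exact ptP2_congr (by funext i; fin_cases i <;> simp) _ _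
  -- image invariance
  have himg : sigmaP2 '' SingC82 = SingC82 := by
    rw [hSing]
    apply Set.Subset.antisymm
    · rintro _ ⟨q, hq, rfl⟩
      simp only [Set.mem_insert_iff, Set.mem_singleton_iff] at hq ⊢
      rcases hq with rfl | rfl | rfl | rfl | rfl | rfl
      · rw [hs1]; exact Or.inl rfl
      · rw [hs2']; exact Or.inr (Or.inl rfl)
      · rw [hsq1]; exact Or.inr (Or.inr (Or.inr (Or.inl rfl)))
      · rw [hsq2]; exact Or.inr (Or.inr (Or.inl rfl))
      · rw [hsq3]; exact Or.inr (Or.inr (Or.inr (Or.inr (Or.inr rfl))))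
      · rw [hsq4]; exact Or.inr (Or.inr (Or.inr (Or.inr (Or.inl rfl))))
    · intro q hq
      simp only [Set.mem_insert_iff, Set.mem_singleton_iff] at hq
      rcases hq with rfl | rfl | rfl | rfl | rfl | rfl
      · exact ⟨P1, by simp, hs1⟩
      · exact ⟨P2pt, by simp, hs2'⟩
      · exact ⟨q2, by simp, hsq2⟩
      · exact ⟨q1, by simp, hsq1⟩
      · exact ⟨q4, by simp, hsq4⟩
      · exact ⟨q3, by simp, hsq3⟩
  -- fixed points
  have hfix : { p ∈ SingC82 | sigmaP2 p = p } = {P1, P2pt} := by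
    ext p
    simp only [Set.mem_setOf_eq, Set.mem_insert_iff, Set.mem_singleton_iff]
    constructor
    · rintro ⟨hp, hf⟩
      rcases hclass p hp with rfl | rfl | rfl | rfl | rfl | rfl
      · exact Or.inl rfl
      · exact Or.inr rfl
      · exact absurd (hsq1 ▸ hf : q2 = q1) nq12.symm
      · exact absurd (hsq2 ▸ hf : q1 = q2) nq12
      · exact absurd (hsq3 ▸ hf : q4 = q3) nq34.symm
      · exact absurd (hsq4 ▸ hf : q3 = q4) nq34
    · rintro (rfl | rfl)
      · exact ⟨hmem1, hs1⟩
      · exact ⟨hmem2, hs2'⟩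
  -- cardinality
  have hcard : SingC82.ncard = 6 := by
    rw [hSing]
    rw [Set.ncard_insert_of_notMem (by simp [nP12, n1q1, n1q2, n1q3, n1q4]) (Set.toFinite _)]
    rw [Set.ncard_insert_of_notMem (by simp [n2q1, n2q2, n2q3, n2q4]) (Set.toFinite _)]
    rw [Set.ncard_insert_of_notMem (by simp [nq12, nq13, nq14]) (Set.toFinite _)]
    rw [Set.ncard_insert_of_notMem (by simp [nq23, nq24]) (Set.toFinite _)]
    rw [Set.ncard_insert_of_notMem (by simp [nq34]) (Set.toFinite _)]
    rw [Set.ncard_singleton]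
  refine ⟨hcard, hmem1, hmem2, ?_, ?_, himg, hfix, q1, q2, q3, q4, ?_, hSing, hsq1, hsq3⟩
  · -- P1 on Lz
    intro v hv
    obtain ⟨c, hc⟩ := (mk_eq_iff v.prop Pt1_ne).mp hv
    have h2 : (c:ℂ) * 0 = v.val 2 := congrFun hc 2
    rw [mul_zero] at h2
    exact h2.symm
  · -- P2 on Lz
    intro v hv
    obtain ⟨c, hc⟩ := (mk_eq_iff v.prop Pt2_ne).mp hv
    have h2 : (c:ℂ) * 0 = v.val 2 := congrFun hc 2
    rw [mul_zero] at h2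
    exact h2.symm
  · -- pairwise
    simp only [List.pairwise_cons, List.mem_cons, List.mem_singleton,
      List.not_mem_nil, List.Pairwise.nil, ne_eq, forall_eq_or_imp, forall_eq,
      List.Pairwise.nil, and_true]
    refine ⟨⟨nP12, n1q1, n1q2, n1q3, by simpa using n1q4⟩,
      ⟨n2q1, n2q2, n2q3, by simpa using n2q4⟩,
      ⟨nq12, nq13, by simpa using nq14⟩, ⟨nq23, by simpa using nq24⟩, by simpa using nq34⟩
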